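/- Let S := {x ∈ ℝ^n | Ax ≥ b} be nonempty, let C = {y | Zᵀy ≥ 0} be a solid pointed polyhedral convex cone containing the recession cone of P[S], with c ∈ int C and c_q = 1. Let t* ∈ Δ and set w := ω(t*). Then the linear program P1(w): minimize wᵀPx subject to Ax ≥ b, has an optimal solution x; and every optimal solution x of P1(w) satisfies: (i) the half-space H*(Px) := {y* ∈ ℝ^q | φ(Px, y*) ≥ 0} contains 𝒟*; (ii) the point s* := (t*_1, …, t*_{q−1}, wᵀPx)ᵀ satisfies s* ∈ 𝒟* and φ(Px, s*) ≤ 0; (iii) Px lies on the boundary of 𝒫; (iv) t* ∉ 𝒟* if and only if wᵀPx < t*_q. -/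

import Mathlib

/-!
`P₁(w)` is a linear program whose dual is feasible: if `A d ≥ 0`, then `P d` is a recession
direction of `P[S]`, hence lies in `C`, so `wᵀP d ≥ 0`, and Farkas' lemma gives `u ≥ 0` with
`Aᵀu = Pᵀw`. Strong duality then yields an optimal `x` and, for every optimal `x`, a `u` with
`(u, w) ∈ T` and `bᵀu = wᵀPx`. Since `φ(y, y*) = yᵀω(y*) − y*_q` and `ω(D*(u', w') − k e_q) = w'`,
(i) is weak duality for each `(u', w') ∈ T`. A point `y*` with `ω(y*) = w` and `y*_q ≤ bᵀu` equals
`D*(u, w) − (bᵀu − y*_q) e_q`, which gives (ii) and (iv). Finally `Px` minimizes the linear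
functional `wᵀ·` over `𝒫`, and `wᵀc = 1`, so `Px` cannot be interior: (iii).

Farkas' lemma is obtained by separating a point from a finitely generated cone, which is closed by
Carathéodory's theorem for cones.
-/

open Matrix Set

section ConicHull

variable {ι E : Type*} [AddCommGroup E] [Module ℝ E]

theorem exists_nonneg_sum_erase_eq_of_not_linearIndepOn [DecidableEq ι] {v : ι → E} {s : Finset ι}
    {u : ι → ℝ} (hu : ∀ i ∈ s, 0 ≤ u i) (hs : ¬LinearIndepOn ℝ v s) :
    ∃ i₀ ∈ s, ∃ u' : ι → ℝ, (∀ i ∈ s.erase i₀, 0 ≤ u' i) ∧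
      ∑ i ∈ s.erase i₀, u' i • v i = ∑ i ∈ s, u i • v i := by
  obtain ⟨f, hf, j, hj, hfj⟩ : ∃ f : ι → ℝ, ∑ i ∈ s, f i • v i = 0 ∧ ∃ j ∈ s, 0 < f j := by
    obtain ⟨f, hf, j, hj, hfj⟩ := not_linearIndepOn_finset_iff.mp hs
    rcases hfj.lt_or_gt with hneg | hpos
    · exact ⟨-f, by simp [hf], j, hj, by simpa using hneg⟩
    · exact ⟨f, hf, j, hj, hpos⟩
  obtain ⟨i₀, hi₀, hmin⟩ := Finset.exists_min_image (s.filter (0 < f ·)) (fun i => u i / f i)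
    ⟨j, Finset.mem_filter.mpr ⟨hj, hfj⟩⟩
  rw [Finset.mem_filter] at hi₀
  -- Moving from `u` along `-f` until the first coordinate hits zero keeps all coordinates
  -- nonnegative and kills the coordinate `i₀`.
  set t := u i₀ / f i₀
  have ht : 0 ≤ t := div_nonneg (hu i₀ hi₀.1) hi₀.2.le
  refine ⟨i₀, hi₀.1, u - t • f, fun i hi => ?_, ?_⟩
  · have his := Finset.mem_of_mem_erase hi
    rcases le_or_gt (f i) 0 with hfi | hfi
    · simp only [Pi.sub_apply, Pi.smul_apply, smul_eq_mul]
      nlinarith [hu i his]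
    · have := hmin i (Finset.mem_filter.mpr ⟨his, hfi⟩)
      rw [le_div_iff₀ hfi] at this
      simp only [Pi.sub_apply, Pi.smul_apply, smul_eq_mul]
      linarith
  · rw [Finset.sum_erase _ (by simp [t, div_mul_cancel₀ _ hi₀.2.ne'])]
    simp [sub_smul, Finset.sum_sub_distrib, mul_smul, ← Finset.smul_sum, hf]

/-- Carathéodory's theorem for cones. -/
theorem exists_linearIndepOn_sum_eq (v : ι → E) (s : Finset ι) (u : ι → ℝ)
    (hu : ∀ i ∈ s, 0 ≤ u i) :
    ∃ t ⊆ s, LinearIndepOn ℝ v t ∧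
      ∃ u' : ι → ℝ, (∀ i ∈ t, 0 ≤ u' i) ∧ ∑ i ∈ t, u' i • v i = ∑ i ∈ s, u i • v i := by
  classical
  induction s using Finset.strongInduction generalizing u with
  | H s ih =>
    by_cases hs : LinearIndepOn ℝ v s
    · exact ⟨s, subset_rfl, hs, u, hu, rfl⟩
    obtain ⟨i₀, hi₀, u', hu', hsum⟩ := exists_nonneg_sum_erase_eq_of_not_linearIndepOn hu hs
    obtain ⟨t, hts, ht, u'', hu'', hsum'⟩ := ih _ (Finset.erase_ssubset hi₀) u' hu'
    exact ⟨t, hts.trans (Finset.erase_subset _ _), ht, u'', hu'', hsum'.trans hsum⟩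

variable [TopologicalSpace E] [IsTopologicalAddGroup E] [ContinuousSMul ℝ E] [T2Space E]

theorem LinearIndependent.isClosed_image_linearCombination_Ici [Fintype ι] {v : ι → E}
    (hv : LinearIndependent ℝ v) : IsClosed (Fintype.linearCombination ℝ v '' Ici 0) :=
  (LinearMap.isClosedEmbedding_of_injective
    (LinearMap.ker_eq_bot.mpr hv.fintypeLinearCombination_injective)).isClosedMap _ isClosed_Ici

theorem isClosed_image_linearCombination_Ici [Fintype ι] (v : ι → E) :
    IsClosed (Fintype.linearCombination ℝ v '' Ici 0) := by
  classical
  suffices Fintype.linearCombination ℝ v '' Ici 0 =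
      ⋃ t : {t : Finset ι // LinearIndepOn ℝ v t},
        Fintype.linearCombination ℝ (fun i : t.1 => v i) '' Ici 0 by
    rw [this]
    exact isClosed_iUnion_of_finite fun t => t.2.isClosed_image_linearCombination_Ici
  ext x
  simp only [mem_image, mem_Ici, mem_iUnion, Fintype.linearCombination_apply]
  constructor
  · rintro ⟨u, hu, rfl⟩
    obtain ⟨t, -, ht, u', hu', hsum⟩ := exists_linearIndepOn_sum_eq v Finset.univ u fun i _ => hu i
    refine ⟨⟨t, ht⟩, fun i => u' i, fun i => hu' i i.2, ?_⟩
    rw [Finset.sum_coe_sort t (fun i => u' i • v i), hsum]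
  · rintro ⟨⟨t, _⟩, w, hw, rfl⟩
    refine ⟨fun i => if h : i ∈ t then w ⟨i, h⟩ else 0, fun i => ?_, ?_⟩
    · by_cases h : i ∈ t
      · simpa [h] using hw ⟨i, h⟩
      · simp [h]
    · rw [← Finset.sum_subset (Finset.subset_univ t) (fun i _ hi => by simp [hi]),
        ← Finset.sum_coe_sort t]
      simp

/-- Farkas' lemma. -/
theorem mem_image_linearCombination_Ici_or_exists_dual [LocallyConvexSpace ℝ E] [Fintype ι]
    (v : ι → E) (g : E) :
    g ∈ Fintype.linearCombination ℝ v '' Ici 0 ∨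
      ∃ f : StrongDual ℝ E, (∀ i, 0 ≤ f (v i)) ∧ f g < 0 := by
  classical
  let K : ProperCone ℝ E :=
    ⟨(PointedCone.positive ℝ (ι → ℝ)).map (Fintype.linearCombination ℝ v), by
      simpa using isClosed_image_linearCombination_Ici v⟩
  by_cases hg : g ∈ K
  · left; simpa [K] using hg
  obtain ⟨f, hfK, hfg⟩ := K.hyperplane_separation_point hg
  refine Or.inr ⟨f, fun i => hfK _ ?_, hfg⟩
  exact PointedCone.mem_map.mpr ⟨Pi.single i 1, by simp [Pi.single_nonneg], by simp⟩

end ConicHull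

namespace Matrix

variable {m n : Type*} [Fintype m] [Fintype n]

theorem farkas (M : Matrix m n ℝ) (g : n → ℝ) :
    (∃ u, 0 ≤ u ∧ Mᵀ *ᵥ u = g) ∨ ∃ d, 0 ≤ M *ᵥ d ∧ g ⬝ᵥ d < 0 := by
  classical
  rcases mem_image_linearCombination_Ici_or_exists_dual (fun i => M i) g
    with ⟨u, hu, hug⟩ | ⟨f, hf, hfg⟩
  · refine Or.inl ⟨u, hu, ?_⟩
    rw [← hug, mulVec_transpose, vecMul_eq_sum, Fintype.linearCombination_apply]
  · have hfd : ∀ x, f x = x ⬝ᵥ fun j => f (Pi.single j 1) := fun x => by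
      conv_lhs => rw [pi_eq_sum_univ' x]
      simp [map_sum, dotProduct]
    exact Or.inr ⟨fun j => f (Pi.single j 1), fun i => by simpa [mulVec, ← hfd] using hf i,
      by rwa [← hfd]⟩

/-- Gale's theorem of the alternative, obtained from Farkas' lemma by homogenization. -/
theorem gale (M : Matrix m n ℝ) (r : m → ℝ) :
    (∃ z, r ≤ M *ᵥ z) ∨ ∃ y, 0 ≤ y ∧ Mᵀ *ᵥ y = 0 ∧ 0 < r ⬝ᵥ y := by
  rcases farkas (fromBlocks (1 : Matrix Unit Unit ℝ) 0 (replicateCol Unit (-r)) M) (Sum.elim (-1) 0)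
    with ⟨u, hu, hug⟩ | ⟨d, hd, hdg⟩
  · simp only [fromBlocks_transpose, fromBlocks_mulVec, Sum.elim_eq_iff] at hug
    have hunit := congrFun hug.1 ()
    simp only [transpose_one, one_mulVec, Pi.add_apply, Function.comp_apply, Pi.neg_apply,
      Pi.one_apply] at hunit
    have hr : ((replicateCol Unit (-r))ᵀ *ᵥ (u ∘ Sum.inr)) () = -(r ⬝ᵥ (u ∘ Sum.inr)) := by
      simp [mulVec, replicateCol, dotProduct]
    rw [hr] at hunit
    have h0 : 0 ≤ u (Sum.inl ()) := hu _
    exact Or.inr ⟨u ∘ Sum.inr, fun i => hu _, by simpa using hug.2, by linarith⟩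
  · simp only [fromBlocks_mulVec, ← Sum.elim_zero_zero, Sum.elim_le_elim_iff] at hd
    have ht : 0 < d (Sum.inl ()) := by simpa [dotProduct] using hdg
    refine Or.inl ⟨(d (Sum.inl ()))⁻¹ • (d ∘ Sum.inr), fun i => ?_⟩
    have hi := hd.2 i
    have hr : (replicateCol Unit (-r) *ᵥ (d ∘ Sum.inl)) i = -(r i * d (Sum.inl ())) := by
      simp [mulVec, replicateCol, dotProduct]
    simp only [Pi.add_apply, hr, Pi.zero_apply] at hi
    rw [mulVec_smul, Pi.smul_apply, smul_eq_mul, le_inv_mul_iff₀ ht]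
    linarith

omit [Fintype n] in
theorem vecMul_replicateRow_of_unique {ι R : Type*} [Unique ι] [NonUnitalNonAssocSemiring R]
    (w : ι → R) (v : n → R) : w ᵥ* replicateRow ι v = w default • v := by
  ext; simp [vecMul, dotProduct, replicateRow]

theorem dotProduct_le_transpose_mulVec_dotProduct {A : Matrix m n ℝ} {b : m → ℝ} {x : n → ℝ}
    {u : m → ℝ} (hx : b ≤ A *ᵥ x) (hu : 0 ≤ u) : b ⬝ᵥ u ≤ (Aᵀ *ᵥ u) ⬝ᵥ x :=
  calc b ⬝ᵥ u ≤ (A *ᵥ x) ⬝ᵥ u := dotProduct_le_dotProduct_of_nonneg_right hx hu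
    _ = (Aᵀ *ᵥ u) ⬝ᵥ x := by rw [dotProduct_comm, dotProduct_mulVec, mulVec_transpose]

/-- Once the linear program `min c ⬝ᵥ x, b ≤ A *ᵥ x` and its dual are both feasible, there is no
Gale certificate `(y, e, s)` against the system of `exists_dotProduct_eq_of_feasible`. -/
theorem dotProduct_add_dotProduct_nonpos {A : Matrix m n ℝ} {b : m → ℝ} {c : n → ℝ}
    {x₀ : n → ℝ} {u₀ : m → ℝ} (hx₀ : b ≤ A *ᵥ x₀) (hu₀ : 0 ≤ u₀) (hAu₀ : Aᵀ *ᵥ u₀ = c)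
    {y : m → ℝ} {e : n → ℝ} {s : ℝ} (hy : 0 ≤ y) (hs : 0 ≤ s) (hAy : Aᵀ *ᵥ y = s • c)
    (hAe : A *ᵥ e ≤ -(s • b)) : b ⬝ᵥ y + c ⬝ᵥ e ≤ 0 := by
  have hce : s * (c ⬝ᵥ e) ≤ -(s * (b ⬝ᵥ y)) := by
    calc s * (c ⬝ᵥ e) = y ⬝ᵥ A *ᵥ e := by
          rw [dotProduct_mulVec, ← mulVec_transpose, hAy, smul_dotProduct, smul_eq_mul]
      _ ≤ y ⬝ᵥ -(s • b) := dotProduct_le_dotProduct_of_nonneg_left hAe hy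
      _ = -(s * (b ⬝ᵥ y)) := by rw [dotProduct_neg, dotProduct_smul, dotProduct_comm, smul_eq_mul]
  rcases hs.lt_or_eq with hs | rfl
  · nlinarith
  have hby : b ⬝ᵥ y ≤ 0 := by
    simpa [hAy] using dotProduct_le_transpose_mulVec_dotProduct hx₀ hy
  have hce : c ⬝ᵥ e ≤ 0 := by
    calc c ⬝ᵥ e = u₀ ⬝ᵥ A *ᵥ e := by rw [← hAu₀, dotProduct_mulVec, mulVec_transpose]
      _ ≤ u₀ ⬝ᵥ 0 := dotProduct_le_dotProduct_of_nonneg_left (by simpa using hAe) hu₀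
      _ = 0 := dotProduct_zero u₀
  linarith

/-- Strong duality for the linear program `min c ⬝ᵥ x, b ≤ A *ᵥ x`. -/
theorem exists_dotProduct_eq_of_feasible [DecidableEq m] {A : Matrix m n ℝ} {b : m → ℝ}
    {c : n → ℝ} {x₀ : n → ℝ} {u₀ : m → ℝ} (hx₀ : b ≤ A *ᵥ x₀) (hu₀ : 0 ≤ u₀)
    (hAu₀ : Aᵀ *ᵥ u₀ = c) :
    ∃ x u, b ≤ A *ᵥ x ∧ 0 ≤ u ∧ Aᵀ *ᵥ u = c ∧ c ⬝ᵥ x = b ⬝ᵥ u := by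
  -- For `z = (x, u)` the five row blocks say `b ≤ A x`, `0 ≤ u`, `c ≤ Aᵀ u`, `Aᵀ u ≤ c` and
  -- `c ⬝ᵥ x ≤ b ⬝ᵥ u`.
  rcases gale (fromRows (fromRows (fromCols A 0) (fromCols 0 (1 : Matrix m m ℝ)))
      (fromRows (fromRows (fromCols 0 Aᵀ) (fromCols 0 (-Aᵀ)))
        (fromCols (replicateRow Unit (-c)) (replicateRow Unit b))))
      (Sum.elim (Sum.elim b 0) (Sum.elim (Sum.elim c (-c)) 0)) with ⟨z, hz⟩ | ⟨y, hy, hMy, hry⟩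
  · simp only [fromRows_mulVec, fromCols_mulVec, Sum.elim_le_elim_iff] at hz
    simp only [zero_mulVec, add_zero, zero_add, one_mulVec, neg_mulVec, neg_le_neg_iff,
      replicateRow_mulVec_eq_const] at hz
    obtain ⟨⟨hx, hu⟩, ⟨hAu, hAu'⟩, hgap⟩ := hz
    have hAu : Aᵀ *ᵥ (z ∘ Sum.inr) = c := le_antisymm hAu' hAu
    have hgap : c ⬝ᵥ (z ∘ Sum.inl) ≤ b ⬝ᵥ (z ∘ Sum.inr) := by
      simpa [neg_dotProduct] using hgap ()
    refine ⟨z ∘ Sum.inl, z ∘ Sum.inr, hx, hu, hAu, le_antisymm hgap ?_⟩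
    simpa [hAu] using dotProduct_le_transpose_mulVec_dotProduct hx hu
  · obtain ⟨y₁, y₂, y₃, y₄, s, rfl⟩ : ∃ y₁ y₂ y₃ y₄ s,
        y = Sum.elim (Sum.elim y₁ y₂) (Sum.elim (Sum.elim y₃ y₄) fun _ => s) :=
      ⟨_, _, _, _, y (Sum.inr (Sum.inr ())), by ext ((i | i) | ((i | i) | ⟨⟩)) <;> rfl⟩
    simp only [← Sum.elim_zero_zero, Sum.elim_le_elim_iff] at hy
    simp only [mulVec_transpose, vecMul_fromRows, vecMul_fromCols, Sum.elim_comp_inl,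
      Sum.elim_comp_inr, ← Sum.elim_add_add, ← Sum.elim_zero_zero, Sum.elim_eq_iff] at hMy
    simp only [sumElim_dotProduct_sumElim, zero_dotProduct, add_zero, neg_dotProduct] at hry
    simp only [vecMul_zero, zero_add, add_zero, vecMul_one, vecMul_transpose, vecMul_neg,
      vecMul_replicateRow_of_unique, smul_neg] at hMy
    refine absurd (dotProduct_add_dotProduct_nonpos (e := y₃ - y₄) hx₀ hu₀ hAu₀ hy.1.1 (hy.2.2 ())
      ?_ ?_) (not_le.mpr ?_)
    · rw [mulVec_transpose]; linear_combination hMy.1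
    · intro i
      have := congrFun hMy.2 i
      have := hy.1.2 i
      simp only [Pi.add_apply, Pi.neg_apply, Pi.smul_apply, Pi.zero_apply, smul_eq_mul,
        mulVec_sub, Pi.sub_apply] at *
      linarith
    · rw [dotProduct_sub]; linarith

theorem exists_isMinOn_of_feasible [DecidableEq m] {A : Matrix m n ℝ} {b : m → ℝ}
    {c : n → ℝ} {x₀ : n → ℝ} {u₀ : m → ℝ} (hx₀ : b ≤ A *ᵥ x₀) (hu₀ : 0 ≤ u₀)
    (hAu₀ : Aᵀ *ᵥ u₀ = c) : ∃ x, b ≤ A *ᵥ x ∧ IsMinOn (c ⬝ᵥ ·) {x | b ≤ A *ᵥ x} x := by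
  obtain ⟨x, u, hx, hu, hAu, hxu⟩ := exists_dotProduct_eq_of_feasible hx₀ hu₀ hAu₀
  refine ⟨x, hx, isMinOn_iff.mpr fun x' hx' => ?_⟩
  simpa [← hAu, ← hxu] using dotProduct_le_transpose_mulVec_dotProduct hx' hu

theorem exists_dotProduct_eq_of_isMinOn [DecidableEq m] {A : Matrix m n ℝ} {b : m → ℝ}
    {c : n → ℝ} {x : n → ℝ} {u₀ : m → ℝ} (hx : b ≤ A *ᵥ x) (hu₀ : 0 ≤ u₀)
    (hAu₀ : Aᵀ *ᵥ u₀ = c) (hmin : IsMinOn (c ⬝ᵥ ·) {x | b ≤ A *ᵥ x} x) :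
    ∃ u, 0 ≤ u ∧ Aᵀ *ᵥ u = c ∧ b ⬝ᵥ u = c ⬝ᵥ x := by
  obtain ⟨x', u, hx', hu, hAu, hxu⟩ := exists_dotProduct_eq_of_feasible hx hu₀ hAu₀
  refine ⟨u, hu, hAu, le_antisymm ?_ (hxu ▸ isMinOn_iff.mp hmin x' hx')⟩
  simpa [hAu] using dotProduct_le_transpose_mulVec_dotProduct hx hu

omit [Fintype m] in
theorem mulVec_mem_recession {k : Type*} {A : Matrix m n ℝ} {b : m → ℝ} (P : Matrix k n ℝ)
    {d : n → ℝ} (hd : 0 ≤ A *ᵥ d) :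
    ∀ y ∈ (P *ᵥ ·) '' {x | b ≤ A *ᵥ x}, ∀ t : ℝ, 0 ≤ t →
      y + t • P *ᵥ d ∈ (P *ᵥ ·) '' {x | b ≤ A *ᵥ x} := by
  rintro _ ⟨x, hx, rfl⟩ t ht
  refine ⟨x + t • d, ?_, by simp [mulVec_add, mulVec_smul]⟩
  show b ≤ A *ᵥ (x + t • d)
  rw [mulVec_add, mulVec_smul]
  exact le_add_of_le_of_nonneg hx (smul_nonneg ht hd)

theorem exists_dual_feasible_of_recession {k : Type*} [Fintype k] {A : Matrix m n ℝ}
    {b : m → ℝ} {P : Matrix k n ℝ} {C : Set (k → ℝ)} {w : k → ℝ}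
    (hrec : {d | ∀ y ∈ (P *ᵥ ·) '' {x | b ≤ A *ᵥ x}, ∀ t : ℝ, 0 ≤ t →
      y + t • d ∈ (P *ᵥ ·) '' {x | b ≤ A *ᵥ x}} ⊆ C) (hC : ∀ y ∈ C, 0 ≤ y ⬝ᵥ w) :
    ∃ u, 0 ≤ u ∧ Aᵀ *ᵥ u = Pᵀ *ᵥ w :=
  (farkas A _).resolve_right fun ⟨d, hd, hwd⟩ => hwd.not_ge <| by
    rw [mulVec_transpose, ← dotProduct_mulVec, dotProduct_comm]
    exact hC _ (hrec (mulVec_mem_recession P hd))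

theorem transpose_mulVec_nonneg {o : Type*} [Fintype o] {Y : Matrix m o ℝ} {w : m → ℝ}
    (h : ∀ l, 0 ≤ l → 0 ≤ Y *ᵥ l ⬝ᵥ w) : 0 ≤ Yᵀ *ᵥ w := by
  classical
  intro j
  exact (h (Pi.single j 1) (Pi.single_nonneg.mpr zero_le_one)).trans_eq
    (by rw [mulVec_single_one]; rfl)

end Matrix

theorem mem_frontier_of_isMinOn {E : Type*} [AddCommGroup E] [Module ℝ E] [TopologicalSpace E]
    [IsTopologicalAddGroup E] [ContinuousSMul ℝ E] {s : Set E} {y v : E} (f : E →ₗ[ℝ] ℝ)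
    (hv : 0 < f v) (hy : y ∈ s) (hmin : IsMinOn f s y) : y ∈ frontier s := by
  rw [frontier_eq_closure_inter_closure]
  refine ⟨subset_closure hy, mem_closure_of_tendsto (f := fun t : ℝ => y - t • v)
    (b := nhdsWithin 0 (Ioi 0)) ?_ ?_⟩
  · exact ((continuous_const.sub (continuous_id.smul continuous_const)).tendsto' 0 y
      (by simp)).mono_left nhdsWithin_le_nhds
  · filter_upwards [self_mem_nhdsWithin] with t (ht : 0 < t) hts
    have := isMinOn_iff.mp hmin _ hts
    rw [map_sub, map_smul, smul_eq_mul] at this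
    nlinarith

theorem mulVec_mem_frontier {k n : Type*} [Fintype k] [Fintype n] {P : Matrix k n ℝ}
    {S : Set (n → ℝ)} {C : Set (k → ℝ)} {w v : k → ℝ} {x : n → ℝ} (h0 : 0 ∈ C)
    (hC : ∀ y ∈ C, 0 ≤ y ⬝ᵥ w) (hv : 0 < v ⬝ᵥ w) (hx : x ∈ S)
    (hmin : ∀ x' ∈ S, w ⬝ᵥ P *ᵥ x ≤ w ⬝ᵥ P *ᵥ x') :
    P *ᵥ x ∈ frontier {y | ∃ x ∈ S, ∃ cc ∈ C, y = P *ᵥ x + cc} := by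
  refine mem_frontier_of_isMinOn (dotProductBilin ℝ ℝ w) (by simpa [dotProduct_comm] using hv)
    ⟨x, hx, 0, h0, by simp⟩ (isMinOn_iff.mpr ?_)
  rintro _ ⟨x', hx', cc, hcc, rfl⟩
  simp only [dotProductBilin_apply_apply, dotProduct_add]
  linarith [hmin x' hx', dotProduct_comm cc w ▸ hC cc hcc]

section Scalarization

variable {q : ℕ}

theorem update_sub_smul_single {ι : Type*} [DecidableEq ι] (f : ι → ℝ) (i : ι) (a k : ℝ) :
    Function.update f i a - k • Pi.single i 1 = Function.update f i (a - k) := by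
  ext j
  by_cases h : j = i <;> simp [h]

/-- The paper's `ω(t)`. -/
def scalarizationWeight (c t : Fin (q + 1) → ℝ) : Fin (q + 1) → ℝ :=
  Function.update t (Fin.last q) (1 - ∑ i : Fin q, c i.castSucc * t i.castSucc)

/-- The paper's coupling function `φ(y, y*)`, written through `ω`. -/
def coupling (c y ys : Fin (q + 1) → ℝ) : ℝ :=
  y ⬝ᵥ scalarizationWeight c ys - ys (Fin.last q)

theorem dotProduct_scalarizationWeight (y c t : Fin (q + 1) → ℝ) :
    y ⬝ᵥ scalarizationWeight c t = ∑ i : Fin q, y i.castSucc * t i.castSucc +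
      y (Fin.last q) * (1 - ∑ i : Fin q, c i.castSucc * t i.castSucc) := by
  simp [dotProduct, Fin.sum_univ_castSucc, scalarizationWeight, Fin.castSucc_ne_last]

theorem dotProduct_scalarizationWeight_self {c : Fin (q + 1) → ℝ} (hc : c (Fin.last q) = 1)
    (t : Fin (q + 1) → ℝ) : c ⬝ᵥ scalarizationWeight c t = 1 := by
  rw [dotProduct_scalarizationWeight, hc]
  ring

theorem scalarizationWeight_eq_self {c t : Fin (q + 1) → ℝ} (hc : c (Fin.last q) = 1)
    (ht : c ⬝ᵥ t = 1) : scalarizationWeight c t = t := by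
  rw [dotProduct, Fin.sum_univ_castSucc, hc, one_mul] at ht
  simp [scalarizationWeight, ← ht]

@[simp]
theorem scalarizationWeight_update_last (c t : Fin (q + 1) → ℝ) (a : ℝ) :
    scalarizationWeight c (Function.update t (Fin.last q) a) = scalarizationWeight c t := by
  simp [scalarizationWeight, Fin.castSucc_ne_last]

theorem update_last_scalarizationWeight (c t : Fin (q + 1) → ℝ) :
    Function.update (scalarizationWeight c t) (Fin.last q) (t (Fin.last q)) = t := by
  simp [scalarizationWeight]

theorem coupling_update_last (c y t : Fin (q + 1) → ℝ) (a : ℝ) :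
    coupling c y (Function.update t (Fin.last q) a) = y ⬝ᵥ scalarizationWeight c t - a := by
  simp [coupling]

theorem coupling_nonneg_of_dual_feasible {m n : Type*} [Fintype m] [Fintype n]
    {A : Matrix m n ℝ} {P : Matrix (Fin (q + 1)) n ℝ} {b : m → ℝ} {c w : Fin (q + 1) → ℝ}
    {x : n → ℝ} {u : m → ℝ} {k : ℝ} (hc : c (Fin.last q) = 1) (hx : b ≤ A *ᵥ x) (hu : 0 ≤ u)
    (hAu : Aᵀ *ᵥ u = Pᵀ *ᵥ w) (hw : c ⬝ᵥ w = 1) (hk : 0 ≤ k) :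
    0 ≤ coupling c (P *ᵥ x)
      (Function.update w (Fin.last q) (b ⬝ᵥ u) - k • Pi.single (Fin.last q) 1) := by
  have hdual := dotProduct_le_transpose_mulVec_dotProduct hx hu
  rw [hAu, mulVec_transpose, ← dotProduct_mulVec, dotProduct_comm w] at hdual
  rw [update_sub_smul_single, coupling_update_last, scalarizationWeight_eq_self hc hw]
  linarith

end Scalarization

theorem stmt8_general (q m n o : ℕ)
    (A : Matrix (Fin m) (Fin n) ℝ) (P : Matrix (Fin (q + 1)) (Fin n) ℝ) (b : Fin m → ℝ)
    (Y : Matrix (Fin (q + 1)) (Fin o) ℝ)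
    (C : Set (Fin (q + 1) → ℝ))
    (hCY : C = {y | ∃ l : Fin o → ℝ, 0 ≤ l ∧ y = Y.mulVec l})
    (c : Fin (q + 1) → ℝ) (hcq : c (Fin.last q) = 1)
    (S : Set (Fin n → ℝ)) (hS : S = {x | b ≤ A.mulVec x}) (hSne : S.Nonempty)
    (hrec : {d | ∀ y ∈ (fun x => P.mulVec x) '' S, ∀ t : ℝ, 0 ≤ t →
        y + t • d ∈ (fun x => P.mulVec x) '' S} ⊆ C)
    (UpperIm : Set (Fin (q + 1) → ℝ))
    (hUpperIm : UpperIm = {y | ∃ x ∈ S, ∃ cc ∈ C, y = P.mulVec x + cc})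
    (T : Set ((Fin m → ℝ) × (Fin (q + 1) → ℝ)))
    (hT : T = {uw | 0 ≤ uw.1 ∧ A.transpose.mulVec uw.1 = P.transpose.mulVec uw.2 ∧
      c ⬝ᵥ uw.2 = 1 ∧ 0 ≤ Y.transpose.mulVec uw.2})
    (LowerIm : Set (Fin (q + 1) → ℝ))
    (hLowerIm : LowerIm = {ys | ∃ uw ∈ T, ∃ k : ℝ, 0 ≤ k ∧
      ys = Function.update uw.2 (Fin.last q) (b ⬝ᵥ uw.1) - k • (Pi.single (Fin.last q) 1 : Fin (q + 1) → ℝ)})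
    (φ : (Fin (q + 1) → ℝ) → (Fin (q + 1) → ℝ) → ℝ)
    (hφ : ∀ y ys, φ y ys = (∑ i : Fin q, y i.castSucc * ys i.castSucc) +
      y (Fin.last q) * (1 - ∑ i : Fin q, c i.castSucc * ys i.castSucc) - ys (Fin.last q))
    (ω : (Fin (q + 1) → ℝ) → (Fin (q + 1) → ℝ))
    (hω : ∀ ts, ω ts = Function.update ts (Fin.last q)
      (1 - ∑ i : Fin q, c i.castSucc * ts i.castSucc))
    (tstar : Fin (q + 1) → ℝ)
    (htstar : ∀ y ∈ C, 0 ≤ y ⬝ᵥ ω tstar)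
    (w : Fin (q + 1) → ℝ) (hw : w = ω tstar) :
    (∃ x ∈ S, ∀ x' ∈ S, w ⬝ᵥ P.mulVec x ≤ w ⬝ᵥ P.mulVec x') ∧
    (∀ x ∈ S, (∀ x' ∈ S, w ⬝ᵥ P.mulVec x ≤ w ⬝ᵥ P.mulVec x') →
      (LowerIm ⊆ {ys | 0 ≤ φ (P.mulVec x) ys}) ∧
      (Function.update tstar (Fin.last q) (w ⬝ᵥ P.mulVec x) ∈ LowerIm ∧
        φ (P.mulVec x) (Function.update tstar (Fin.last q) (w ⬝ᵥ P.mulVec x)) ≤ 0) ∧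
      P.mulVec x ∈ frontier UpperIm ∧
      (tstar ∉ LowerIm ↔ w ⬝ᵥ P.mulVec x < tstar (Fin.last q))) := by
  subst hS hUpperIm hT hCY
  obtain rfl : ω = scalarizationWeight c := funext hω
  obtain rfl : φ = coupling c := funext₂ fun y ys => by
    rw [hφ, coupling, dotProduct_scalarizationWeight]
  rw [← hw] at htstar
  have hcw : c ⬝ᵥ w = 1 := hw ▸ dotProduct_scalarizationWeight_self hcq tstar
  have hobj : ∀ w x, w ⬝ᵥ P *ᵥ x = (Pᵀ *ᵥ w) ⬝ᵥ x := fun w x => by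
    rw [dotProduct_mulVec, mulVec_transpose]
  obtain ⟨x₀, hx₀⟩ := hSne
  obtain ⟨u₀, hu₀, hAu₀⟩ := exists_dual_feasible_of_recession hrec htstar
  simp only [hobj]
  refine ⟨exists_isMinOn_of_feasible hx₀ hu₀ hAu₀, fun x hx hmin => ?_⟩
  obtain ⟨u, hu, hAu, hbu⟩ := exists_dotProduct_eq_of_isMinOn hx hu₀ hAu₀ hmin
  simp only [← hobj] at hbu hmin ⊢
  have hlower : ∀ ys ∈ LowerIm, 0 ≤ coupling c (P *ᵥ x) ys := by
    rw [hLowerIm]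
    rintro _ ⟨uw, ⟨hu', hAu', hcw', -⟩, k, hk, rfl⟩
    exact coupling_nonneg_of_dual_feasible hcq hx hu' hAu' hcw' hk
  have hmem : ∀ ys, scalarizationWeight c ys = w → ys (Fin.last q) ≤ w ⬝ᵥ P *ᵥ x →
      ys ∈ LowerIm := fun ys hys hle => hLowerIm ▸
    ⟨(u, w), ⟨hu, hAu, hcw, transpose_mulVec_nonneg fun l hl => htstar _ ⟨l, hl, rfl⟩⟩,
      b ⬝ᵥ u - ys (Fin.last q), by linarith,
      by rw [update_sub_smul_single, sub_sub_cancel, ← hys, update_last_scalarizationWeight]⟩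
  refine ⟨hlower,
    ⟨hmem _ (by simp [hw]) (by simp), by simp [coupling_update_last, ← hw, dotProduct_comm]⟩,
    mulVec_mem_frontier (v := c) ⟨0, le_rfl, by simp⟩ htstar (hcw ▸ one_pos) hx hmin,
    fun h => not_le.mp fun hle => h (hmem _ hw.symm hle), fun hlt h => (hlower _ h).not_gt ?_⟩
  rw [coupling, ← hw, dotProduct_comm]
  linarith

/-- Ambient space `ℝ^{q+1}` (the paper's `ℝ^q`).  For `t* ∈ Δ` and
`w := ω(t*)`, the weighted-sum scalarization `P₁(w)` has an optimal solution, and every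
optimal solution `x` satisfies: (i) the half-space `{y* | φ(Px, y*) ≥ 0}` contains the
lower image; (ii) `s* := (t*_1, …, t*_{q−1}, wᵀPx)` belongs to the lower image and
`φ(Px, s*) ≤ 0`; (iii) `Px` lies on the boundary of the upper image; (iv) `t*` is not
in the lower image iff `wᵀPx < t*_q`. -/
theorem stmt8 (q m n o p : ℕ)
    (A : Matrix (Fin m) (Fin n) ℝ) (P : Matrix (Fin (q + 1)) (Fin n) ℝ) (b : Fin m → ℝ)
    (Y : Matrix (Fin (q + 1)) (Fin o) ℝ) (Z : Matrix (Fin (q + 1)) (Fin p) ℝ)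
    (C : Set (Fin (q + 1) → ℝ))
    (hCZ : C = {y | 0 ≤ Z.transpose.mulVec y})
    (hCY : C = {y | ∃ l : Fin o → ℝ, 0 ≤ l ∧ y = Y.mulVec l})
    (hC_pointed : C ∩ (-C) = {0})
    (hC_solid : (interior C).Nonempty)
    (c : Fin (q + 1) → ℝ) (hc : c ∈ interior C) (hcq : c (Fin.last q) = 1)
    (S : Set (Fin n → ℝ)) (hS : S = {x | b ≤ A.mulVec x}) (hSne : S.Nonempty)
    (hrec : {d | ∀ y ∈ (fun x => P.mulVec x) '' S, ∀ t : ℝ, 0 ≤ t →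
        y + t • d ∈ (fun x => P.mulVec x) '' S} ⊆ C)
    (UpperIm : Set (Fin (q + 1) → ℝ))
    (hUpperIm : UpperIm = {y | ∃ x ∈ S, ∃ cc ∈ C, y = P.mulVec x + cc})
    (T : Set ((Fin m → ℝ) × (Fin (q + 1) → ℝ)))
    (hT : T = {uw | 0 ≤ uw.1 ∧ A.transpose.mulVec uw.1 = P.transpose.mulVec uw.2 ∧
      c ⬝ᵥ uw.2 = 1 ∧ 0 ≤ Y.transpose.mulVec uw.2})
    (LowerIm : Set (Fin (q + 1) → ℝ))
    (hLowerIm : LowerIm = {ys | ∃ uw ∈ T, ∃ k : ℝ, 0 ≤ k ∧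
      ys = Function.update uw.2 (Fin.last q) (b ⬝ᵥ uw.1) - k • (Pi.single (Fin.last q) 1 : Fin (q + 1) → ℝ)})
    (φ : (Fin (q + 1) → ℝ) → (Fin (q + 1) → ℝ) → ℝ)
    (hφ : ∀ y ys, φ y ys = (∑ i : Fin q, y i.castSucc * ys i.castSucc) +
      y (Fin.last q) * (1 - ∑ i : Fin q, c i.castSucc * ys i.castSucc) - ys (Fin.last q))
    (ω : (Fin (q + 1) → ℝ) → (Fin (q + 1) → ℝ))
    (hω : ∀ ts, ω ts = Function.update ts (Fin.last q)
      (1 - ∑ i : Fin q, c i.castSucc * ts i.castSucc))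
    (tstar : Fin (q + 1) → ℝ)
    (htstar : ∀ y ∈ C, 0 ≤ y ⬝ᵥ ω tstar)
    (w : Fin (q + 1) → ℝ) (hw : w = ω tstar) :
    (∃ x ∈ S, ∀ x' ∈ S, w ⬝ᵥ P.mulVec x ≤ w ⬝ᵥ P.mulVec x') ∧
    (∀ x ∈ S, (∀ x' ∈ S, w ⬝ᵥ P.mulVec x ≤ w ⬝ᵥ P.mulVec x') →
      (LowerIm ⊆ {ys | 0 ≤ φ (P.mulVec x) ys}) ∧
      (Function.update tstar (Fin.last q) (w ⬝ᵥ P.mulVec x) ∈ LowerIm ∧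
        φ (P.mulVec x) (Function.update tstar (Fin.last q) (w ⬝ᵥ P.mulVec x)) ≤ 0) ∧
      P.mulVec x ∈ frontier UpperIm ∧
      (tstar ∉ LowerIm ↔ w ⬝ᵥ P.mulVec x < tstar (Fin.last q))) :=
  stmt8_general q m n o A P b Y C hCY c hcq S hS hSne hrec UpperIm hUpperIm T hT LowerIm hLowerIm φ
    hφ ω hω tstar htstar w hw
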